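/- The integral equation has at most one continuous solution: if G₁, G₂ : E → ℝ are continuous and both satisfy G = G0 + Φ_G on E, then G₁(ξ,η) = G₂(ξ,η) for all (ξ,η) ∈ E. -/

import Mathlib

open MeasureTheory Set
open scoped ENNReal

noncomputable section

/-- The triangular domain `D = {(x,y) : 0 ≤ y ≤ x ≤ 1}`. -/
def Dset : Set (ℝ × ℝ) := {p : ℝ × ℝ | 0 ≤ p.2 ∧ p.2 ≤ p.1 ∧ p.1 ≤ 1}

/-- Partial derivative in the first variable (within `D`). -/
def pd1 (K : ℝ × ℝ → ℝ) (p : ℝ × ℝ) : ℝ := fderivWithin ℝ K Dset p (1, 0)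

/-- Partial derivative in the second variable (within `D`). -/
def pd2 (K : ℝ × ℝ → ℝ) (p : ℝ × ℝ) : ℝ := fderivWithin ℝ K Dset p (0, 1)

/-- `K` is a `C²` solution of the kernel equation on `D`:
(i) `k_xx - k_yy = μ k + f + ∫_y^x k(x,z) f(z,y) dz` on `D`;
(ii) `k_x(x,x) + k_y(x,x) = λ0/2`; (iii) `k_y(x,0) = 0`; (iv) `k(0,0) = 0`. -/
def IsKernelSol (lam0 : ℝ) (c1 : ℝ → ℝ) (f : ℝ → ℝ → ℝ) (K : ℝ × ℝ → ℝ) : Prop :=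
  ContDiffOn ℝ 2 K Dset ∧
  (∀ p ∈ Dset, pd1 (pd1 K) p - pd2 (pd2 K) p =
      (lam0 - c1 p.1 + c1 p.2) * K p + f p.1 p.2 + ∫ z in p.2..p.1, K (p.1, z) * f z p.2) ∧
  (∀ x ∈ Icc (0:ℝ) 1, pd1 K (x, x) + pd2 K (x, x) = lam0 / 2) ∧
  (∀ x ∈ Icc (0:ℝ) 1, pd2 K (x, 0) = 0) ∧
  K (0, 0) = 0

/-- The transformed domain `E = {(ξ,η) : 0 ≤ η ≤ 1, η ≤ ξ ≤ 2 - η}`. -/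
def Eset : Set (ℝ × ℝ) := {p : ℝ × ℝ | 0 ≤ p.2 ∧ p.2 ≤ 1 ∧ p.2 ≤ p.1 ∧ p.1 ≤ 2 - p.2}

/-- `μ̃(ξ,η) := λ0 - c1((ξ+η)/2) + c1((ξ-η)/2)`. -/
def mutld (lam0 : ℝ) (c1 : ℝ → ℝ) (xi eta : ℝ) : ℝ :=
  lam0 - c1 ((xi + eta) / 2) + c1 ((xi - eta) / 2)

/-- The inhomogeneous term `G0` of the integral equation. -/
def Gzero (lam0 : ℝ) (f : ℝ → ℝ → ℝ) (xi eta : ℝ) : ℝ :=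
  lam0 / 4 * (xi + eta)
    + (1 / 4) * (∫ tau in eta..xi, ∫ s in (0:ℝ)..eta, f ((tau + s) / 2) ((tau - s) / 2))
    + (1 / 2) * (∫ tau in (0:ℝ)..eta, ∫ s in (0:ℝ)..tau, f ((tau + s) / 2) ((tau - s) / 2))

/-- The integral operator `Φ_H`. -/
def Phi (lam0 : ℝ) (c1 : ℝ → ℝ) (f : ℝ → ℝ → ℝ) (H : ℝ → ℝ → ℝ) (xi eta : ℝ) : ℝ :=
  (1 / 4) * (∫ tau in eta..xi, ∫ s in (0:ℝ)..eta, mutld lam0 c1 tau s * H tau s)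
    + (1 / 2) * (∫ tau in (0:ℝ)..eta, ∫ s in (0:ℝ)..tau, mutld lam0 c1 tau s * H tau s)
    + (1 / 4) * (∫ z in eta..xi, ∫ s in (0:ℝ)..eta, ∫ tau in z..(z + eta - s),
        f ((tau - s) / 2) (z - (tau + s) / 2) * H tau s)
    + (1 / 2) * (∫ z in (0:ℝ)..eta, ∫ s in (0:ℝ)..z, ∫ tau in z..(2 * z - s),
        f ((tau - s) / 2) (z - (tau + s) / 2) * H tau s)

/-!
The difference `W = G₁ - G₂` solves the homogeneous equation `W = Φ_W` on `E`. To see that `Φ`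
is linear, extend `c1`, `f`, `G₁`, `G₂` continuously to the plane (Tietze): `Φ` of the extended
data is an iterated integral of continuous functions, and on `E` it agrees with `Φ` of the original
data because every integration variable stays in `[0,1]`, `[0,1]²` or `E`. Each term of `Φ_H(ξ,η)`
integrates `H(τ,s)` over `s ∈ [0,η]` against weights bounded by `A`, and the remaining integrations
contribute at most `(ξ + η)/2 ≤ 1`; so `|H| ≤ D sⁿ` on `E` improves to `|Φ_H| ≤ A D ηⁿ⁺¹/(n+1)`.
Iterating from `|W| ≤ M` gives `|W| ≤ M (Aη)ⁿ/n! → 0`.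
-/

theorem ContinuousOn.exists_continuous_eqOn {X : Type*} [TopologicalSpace X] [NormalSpace X]
    {s : Set X} (hs : IsClosed s) {f : X → ℝ} (hf : ContinuousOn f s) :
    ∃ g : X → ℝ, Continuous g ∧ EqOn g f s := by
  obtain ⟨g, hg⟩ := ContinuousMap.exists_restrict_eq hs ⟨s.domRestrict f, hf.domRestrict⟩
  exact ⟨g, g.continuous, fun x hx => congr($hg ⟨x, hx⟩)⟩

theorem eq_zero_of_volterra_estimate {α E : Type*} [NormedAddCommGroup E] {S : Set α}
    {w : α → E} {h : α → ℝ} {M C : ℝ} (hM : ∀ x ∈ S, ‖w x‖ ≤ M)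
    (hstep : ∀ (n : ℕ) (D : ℝ), (∀ x ∈ S, ‖w x‖ ≤ D * h x ^ n) →
      ∀ x ∈ S, ‖w x‖ ≤ C * D * h x ^ (n + 1) / (n + 1)) :
    ∀ x ∈ S, w x = 0 := by
  have hbound : ∀ n : ℕ, ∀ x ∈ S, ‖w x‖ ≤ M * C ^ n / n.factorial * h x ^ n := by
    intro n
    induction n with
    | zero => simpa using hM
    | succ n ih =>
      intro x hx
      convert hstep n _ ih x hx using 1
      rw [Nat.factorial_succ]
      push_cast
      field_simp
      ring
  intro x hx
  have hlim : Filter.Tendsto (fun n : ℕ => M * ((C * h x) ^ n / n.factorial))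
      Filter.atTop (nhds 0) := by
    simpa using (FloorSemiring.tendsto_pow_div_factorial_atTop (C * h x)).const_mul M
  refine norm_le_zero_iff.mp (ge_of_tendsto' hlim fun n => ?_)
  calc ‖w x‖ ≤ M * C ^ n / n.factorial * h x ^ n := hbound n x hx
    _ = M * ((C * h x) ^ n / n.factorial) := by ring

theorem continuous_parametric_intervalIntegral_of_continuous_bounds {X : Type*}
    [TopologicalSpace X] {F : X → ℝ → ℝ} (hF : Continuous F.uncurry) {l u : X → ℝ}
    (hl : Continuous l) (hu : Continuous u) :
    Continuous fun x => ∫ t in l x..u x, F x t := by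
  have hint : ∀ x a b, IntervalIntegrable (F x) volume a b := fun x _ _ =>
    (hF.comp (Continuous.prodMk_right x)).intervalIntegrable _ _
  have hsplit : (fun x => ∫ t in l x..u x, F x t) =
      fun x => (∫ t in (0 : ℝ)..u x, F x t) - ∫ t in (0 : ℝ)..l x, F x t :=
    funext fun x => (intervalIntegral.integral_interval_sub_left (hint _ _ _) (hint _ _ _)).symm
  rw [hsplit]
  exact (intervalIntegral.continuous_parametric_intervalIntegral_of_continuous hF hu).sub
    (intervalIntegral.continuous_parametric_intervalIntegral_of_continuous hF hl)

theorem intervalIntegral_intervalIntegral_sub {F G : ℝ → ℝ → ℝ} (hF : Continuous F.uncurry)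
    (hG : Continuous G.uncurry) {l u : ℝ → ℝ} (hl : Continuous l) (hu : Continuous u)
    (a b : ℝ) :
    ∫ x in a..b, ∫ y in l x..u x, (F x y - G x y) =
      (∫ x in a..b, ∫ y in l x..u x, F x y) - ∫ x in a..b, ∫ y in l x..u x, G x y := by
  have hslice : ∀ {K : ℝ → ℝ → ℝ}, Continuous K.uncurry → ∀ x c d,
      IntervalIntegrable (K x) volume c d := fun hK x _ _ =>
    (hK.comp (Continuous.prodMk_right x)).intervalIntegrable _ _
  simp_rw [intervalIntegral.integral_sub (hslice hF _ _ _) (hslice hG _ _ _)]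
  exact intervalIntegral.integral_sub
    ((continuous_parametric_intervalIntegral_of_continuous_bounds hF hl hu).intervalIntegrable _ _)
    ((continuous_parametric_intervalIntegral_of_continuous_bounds hG hl hu).intervalIntegrable _ _)

theorem intervalIntegral_intervalIntegral_intervalIntegral_sub {F G : ℝ → ℝ → ℝ → ℝ}
    (hF : Continuous fun p : ℝ × ℝ × ℝ => F p.1 p.2.1 p.2.2)
    (hG : Continuous fun p : ℝ × ℝ × ℝ => G p.1 p.2.1 p.2.2) {l u : ℝ → ℝ}
    (hl : Continuous l) (hu : Continuous u) {l' u' : ℝ → ℝ → ℝ} (hl' : Continuous l'.uncurry)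
    (hu' : Continuous u'.uncurry) (a b : ℝ) :
    ∫ x in a..b, ∫ y in l x..u x, ∫ z in l' x y..u' x y, (F x y z - G x y z) =
      (∫ x in a..b, ∫ y in l x..u x, ∫ z in l' x y..u' x y, F x y z) -
        ∫ x in a..b, ∫ y in l x..u x, ∫ z in l' x y..u' x y, G x y z := by
  have hinner : ∀ {K : ℝ → ℝ → ℝ → ℝ}, (Continuous fun p : ℝ × ℝ × ℝ => K p.1 p.2.1 p.2.2) →
      Continuous (fun x y => ∫ z in l' x y..u' x y, K x y z).uncurry := fun {K} hK =>
    continuous_parametric_intervalIntegral_of_continuous_bounds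
      (F := fun p : ℝ × ℝ => K p.1 p.2)
      (hK.comp (by fun_prop : Continuous fun q : (ℝ × ℝ) × ℝ => (q.1.1, q.1.2, q.2))) hl' hu'
  have hslice : ∀ {K : ℝ → ℝ → ℝ → ℝ}, (Continuous fun p : ℝ × ℝ × ℝ => K p.1 p.2.1 p.2.2) →
      ∀ x y c d, IntervalIntegrable (K x y) volume c d := fun hK x y _ _ =>
    (hK.comp (by fun_prop : Continuous fun z : ℝ => (x, y, z))).intervalIntegrable _ _
  simp_rw [intervalIntegral.integral_sub (hslice hF _ _ _ _) (hslice hG _ _ _ _)]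
  exact intervalIntegral_intervalIntegral_sub (hinner hF) (hinner hG) hl hu a b

theorem continuous_mutld_uncurry (lam0 : ℝ) {c1 : ℝ → ℝ} (hc1 : Continuous c1) :
    Continuous (mutld lam0 c1).uncurry := by
  unfold mutld
  fun_prop

theorem Phi_sub {lam0 : ℝ} {c1 : ℝ → ℝ} {f H1 H2 : ℝ → ℝ → ℝ} (hc1 : Continuous c1)
    (hf : Continuous f.uncurry) (hH1 : Continuous H1.uncurry) (hH2 : Continuous H2.uncurry)
    (xi eta : ℝ) :
    Phi lam0 c1 f (H1 - H2) xi eta = Phi lam0 c1 f H1 xi eta - Phi lam0 c1 f H2 xi eta := by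
  have hweighted : ∀ {H : ℝ → ℝ → ℝ}, Continuous H.uncurry →
      Continuous (fun tau s => mutld lam0 c1 tau s * H tau s).uncurry := fun hH =>
    (continuous_mutld_uncurry lam0 hc1).mul hH
  have hkernel : ∀ {H : ℝ → ℝ → ℝ}, Continuous H.uncurry →
      Continuous fun p : ℝ × ℝ × ℝ => f ((p.2.2 - p.2.1) / 2) (p.1 - (p.2.2 + p.2.1) / 2) *
        H p.2.2 p.2.1 := fun {H} hH =>
    (hf.comp (by fun_prop : Continuous fun p : ℝ × ℝ × ℝ =>
      ((p.2.2 - p.2.1) / 2, p.1 - (p.2.2 + p.2.1) / 2))).mul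
      (hH.comp (by fun_prop : Continuous fun p : ℝ × ℝ × ℝ => (p.2.2, p.2.1)))
  simp only [Phi, Pi.sub_apply, mul_sub]
  rw [intervalIntegral_intervalIntegral_sub (hweighted hH1) (hweighted hH2) continuous_const
      continuous_const,
    intervalIntegral_intervalIntegral_sub (hweighted hH1) (hweighted hH2) continuous_const
      continuous_id',
    intervalIntegral_intervalIntegral_intervalIntegral_sub (hkernel hH1) (hkernel hH2)
      continuous_const continuous_const (by fun_prop) (by fun_prop),
    intervalIntegral_intervalIntegral_intervalIntegral_sub (hkernel hH1) (hkernel hH2)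
      continuous_const continuous_id' (by fun_prop) (by fun_prop)]
  ring

theorem isClosed_Eset : IsClosed Eset := by
  simp only [Eset, ofPred_and]
  refine .inter (isClosed_le ?_ ?_) (.inter (isClosed_le ?_ ?_)
    (.inter (isClosed_le ?_ ?_) (isClosed_le ?_ ?_))) <;> fun_prop

theorem isCompact_Eset : IsCompact Eset := by
  refine isCompact_Icc.of_isClosed_subset isClosed_Eset (s := Icc (0, 0) (2, 1)) ?_
  rintro ⟨xi, eta⟩ ⟨h0, h1, h2, h3⟩
  exact ⟨⟨by linarith, h0⟩, ⟨by linarith, h1⟩⟩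

section Regions

variable {xi eta tau s z : ℝ}

theorem mk_mem_Eset_of_mem_rectangle (hp : (xi, eta) ∈ Eset) (htau : tau ∈ Icc eta xi)
    (hs : s ∈ Icc 0 eta) : (tau, s) ∈ Eset := by
  obtain ⟨_, _, _, _⟩ := hp
  obtain ⟨_, _⟩ := htau
  obtain ⟨_, _⟩ := hs
  exact ⟨by linarith, by linarith, by linarith, by linarith⟩

theorem mk_mem_Eset_of_mem_triangle (hp : (xi, eta) ∈ Eset) (htau : tau ∈ Icc 0 eta)
    (hs : s ∈ Icc 0 tau) : (tau, s) ∈ Eset := by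
  obtain ⟨_, _, _, _⟩ := hp
  obtain ⟨_, _⟩ := htau
  obtain ⟨_, _⟩ := hs
  exact ⟨by linarith, by linarith, by linarith, by linarith⟩

theorem kernel_args_mem_square (hts : (tau, s) ∈ Eset) (hz : z ≤ tau) (hz' : tau + s ≤ 2 * z) :
    ((tau - s) / 2, z - (tau + s) / 2) ∈ Icc (0 : ℝ) 1 ×ˢ Icc (0 : ℝ) 1 := by
  obtain ⟨_, _, _, _⟩ := hts
  exact ⟨⟨by linarith, by linarith⟩, ⟨by linarith, by linarith⟩⟩

theorem kernel_args_mem_of_mem_rectangle (hp : (xi, eta) ∈ Eset) (hz : z ∈ Icc eta xi)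
    (hs : s ∈ Icc 0 eta) (htau : tau ∈ Icc z (z + eta - s)) :
    (tau, s) ∈ Eset ∧ ((tau - s) / 2, z - (tau + s) / 2) ∈ Icc (0 : ℝ) 1 ×ˢ Icc (0 : ℝ) 1 := by
  obtain ⟨_, _, _, _⟩ := hp
  obtain ⟨_, _⟩ := hz
  obtain ⟨_, _⟩ := hs
  obtain ⟨_, _⟩ := htau
  have hts : (tau, s) ∈ Eset := ⟨by linarith, by linarith, by linarith, by linarith⟩
  exact ⟨hts, kernel_args_mem_square hts (by linarith) (by linarith)⟩

theorem kernel_args_mem_of_mem_triangle (hp : (xi, eta) ∈ Eset) (hz : z ∈ Icc 0 eta)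
    (hs : s ∈ Icc 0 z) (htau : tau ∈ Icc z (2 * z - s)) :
    (tau, s) ∈ Eset ∧ ((tau - s) / 2, z - (tau + s) / 2) ∈ Icc (0 : ℝ) 1 ×ˢ Icc (0 : ℝ) 1 := by
  obtain ⟨_, _, _, _⟩ := hp
  obtain ⟨_, _⟩ := hz
  obtain ⟨_, _⟩ := hs
  obtain ⟨_, _⟩ := htau
  have hts : (tau, s) ∈ Eset := ⟨by linarith, by linarith, by linarith, by linarith⟩
  exact ⟨hts, kernel_args_mem_square hts (by linarith) (by linarith)⟩

end Regions

theorem mutld_congr {lam0 tau s : ℝ} {c1 c1' : ℝ → ℝ} (hc : EqOn c1 c1' (Icc 0 1))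
    (hts : (tau, s) ∈ Eset) : mutld lam0 c1 tau s = mutld lam0 c1' tau s := by
  obtain ⟨_, _, _, _⟩ := hts
  rw [mutld, mutld, hc ⟨by linarith, by linarith⟩, hc ⟨by linarith, by linarith⟩]

theorem Phi_congr {lam0 xi eta : ℝ} {c1 c1' : ℝ → ℝ} {f f' H H' : ℝ → ℝ → ℝ}
    (hc : EqOn c1 c1' (Icc 0 1))
    (hf : ∀ x y, (x, y) ∈ Icc (0 : ℝ) 1 ×ˢ Icc (0 : ℝ) 1 → f x y = f' x y)
    (hH : ∀ tau s, (tau, s) ∈ Eset → H tau s = H' tau s) (hp : (xi, eta) ∈ Eset) :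
    Phi lam0 c1 f H xi eta = Phi lam0 c1' f' H' xi eta := by
  have heta : 0 ≤ eta := hp.1
  have hle : eta ≤ xi := hp.2.2.1
  unfold Phi
  refine congr_arg₂ (· + ·) (congr_arg₂ (· + ·) (congr_arg₂ (· + ·)
    (congr_arg (1 / 4 * ·) ?_) (congr_arg (1 / 2 * ·) ?_)) (congr_arg (1 / 4 * ·) ?_))
    (congr_arg (1 / 2 * ·) ?_)
  · refine intervalIntegral.integral_congr fun tau htau => ?_
    refine intervalIntegral.integral_congr fun s hs => ?_
    rw [uIcc_of_le hle] at htau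
    rw [uIcc_of_le heta] at hs
    have hts := mk_mem_Eset_of_mem_rectangle hp htau hs
    simp only [mutld_congr hc hts, hH tau s hts]
  · refine intervalIntegral.integral_congr fun tau htau => ?_
    refine intervalIntegral.integral_congr fun s hs => ?_
    rw [uIcc_of_le heta] at htau
    rw [uIcc_of_le htau.1] at hs
    have hts := mk_mem_Eset_of_mem_triangle hp htau hs
    simp only [mutld_congr hc hts, hH tau s hts]
  · refine intervalIntegral.integral_congr fun z hz => ?_
    refine intervalIntegral.integral_congr fun s hs => ?_
    refine intervalIntegral.integral_congr fun tau htau => ?_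
    rw [uIcc_of_le hle] at hz
    rw [uIcc_of_le heta] at hs
    rw [uIcc_of_le (by linarith [hs.2])] at htau
    obtain ⟨hts, hargs⟩ := kernel_args_mem_of_mem_rectangle hp hz hs htau
    simp only [hf _ _ hargs, hH tau s hts]
  · refine intervalIntegral.integral_congr fun z hz => ?_
    refine intervalIntegral.integral_congr fun s hs => ?_
    refine intervalIntegral.integral_congr fun tau htau => ?_
    rw [uIcc_of_le heta] at hz
    rw [uIcc_of_le hz.1] at hs
    rw [uIcc_of_le (by linarith [hs.2])] at htau
    obtain ⟨hts, hargs⟩ := kernel_args_mem_of_mem_triangle hp hz hs htau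
    simp only [hf _ _ hargs, hH tau s hts]

section Estimates

variable {F : ℝ → ℝ → ℝ} {xi eta K : ℝ} {n : ℕ}

theorem norm_intervalIntegral_le_mul_pow_succ_div {G : ℝ → ℝ} {c : ℝ} (hc : 0 ≤ c)
    (h : ∀ s ∈ Icc 0 c, ‖G s‖ ≤ K * s ^ n) :
    ‖∫ s in 0..c, G s‖ ≤ K * c ^ (n + 1) / (n + 1) := by
  calc ‖∫ s in 0..c, G s‖ ≤ ∫ s in 0..c, K * s ^ n :=
        intervalIntegral.norm_integral_le_of_norm_le hc
          (ae_of_all _ fun s hs => h s (Ioc_subset_Icc_self hs))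
          ((continuous_const.mul (continuous_pow n)).intervalIntegrable _ _)
    _ = K * c ^ (n + 1) / (n + 1) := by
        rw [intervalIntegral.integral_const_mul, integral_pow]
        ring

theorem norm_integral_integral_rectangle_le (heta : 0 ≤ eta) (hle : eta ≤ xi)
    (h : ∀ tau ∈ Icc eta xi, ∀ s ∈ Icc 0 eta, ‖F tau s‖ ≤ K * s ^ n) :
    ‖∫ tau in eta..xi, ∫ s in 0..eta, F tau s‖ ≤ (xi - eta) * (K * eta ^ (n + 1) / (n + 1)) := by
  have hbound := intervalIntegral.norm_integral_le_of_norm_le_const fun tau htau =>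
    norm_intervalIntegral_le_mul_pow_succ_div heta
      (h tau (Ioc_subset_Icc_self (uIoc_of_le hle ▸ htau)))
  rwa [abs_of_nonneg (sub_nonneg.2 hle), mul_comm] at hbound

theorem norm_integral_integral_triangle_le (heta : 0 ≤ eta) (hK : 0 ≤ K)
    (h : ∀ tau ∈ Icc 0 eta, ∀ s ∈ Icc 0 tau, ‖F tau s‖ ≤ K * s ^ n) :
    ‖∫ tau in 0..eta, ∫ s in 0..tau, F tau s‖ ≤ eta * (K * eta ^ (n + 1) / (n + 1)) := by
  have hbound := intervalIntegral.norm_integral_le_of_norm_le_const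
    (C := K * eta ^ (n + 1) / (n + 1)) fun tau htau => by
      obtain ⟨htau0, htau1⟩ := uIoc_of_le heta ▸ htau
      refine (norm_intervalIntegral_le_mul_pow_succ_div htau0.le (h tau ⟨htau0.le, htau1⟩)).trans ?_
      gcongr
  rwa [sub_zero, abs_of_nonneg heta, mul_comm] at hbound

theorem norm_intervalIntegral_le_of_sub_le_one {G : ℝ → ℝ} {z w : ℝ} (hzw : z ≤ w)
    (hw : w - z ≤ 1) (hK : 0 ≤ K) (h : ∀ t ∈ Icc z w, ‖G t‖ ≤ K) : ‖∫ t in z..w, G t‖ ≤ K := by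
  refine (intervalIntegral.norm_integral_le_of_norm_le_const fun t ht =>
    h t (Ioc_subset_Icc_self (uIoc_of_le hzw ▸ ht))).trans ?_
  rw [abs_of_nonneg (sub_nonneg.2 hzw)]
  exact mul_le_of_le_one_right hK hw

end Estimates

theorem norm_Phi_le {lam0 A D xi eta : ℝ} {c1 : ℝ → ℝ} {f H : ℝ → ℝ → ℝ} {n : ℕ}
    (hmu : ∀ tau s, (tau, s) ∈ Eset → ‖mutld lam0 c1 tau s‖ ≤ A)
    (hf : ∀ x y, (x, y) ∈ Icc (0 : ℝ) 1 ×ˢ Icc (0 : ℝ) 1 → ‖f x y‖ ≤ A)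
    (hH : ∀ tau s, (tau, s) ∈ Eset → ‖H tau s‖ ≤ D * s ^ n) (hp : (xi, eta) ∈ Eset) :
    ‖Phi lam0 c1 f H xi eta‖ ≤ A * D * eta ^ (n + 1) / (n + 1) := by
  obtain ⟨heta, -, hle, hxi⟩ : 0 ≤ eta ∧ eta ≤ 1 ∧ eta ≤ xi ∧ xi ≤ 2 - eta := id hp
  have hA : 0 ≤ A := (norm_nonneg _).trans
    (hf 0 0 ⟨left_mem_Icc.2 zero_le_one, left_mem_Icc.2 zero_le_one⟩)
  have hD : 0 ≤ D := by
    simpa using (norm_nonneg _).trans (hH 1 1 ⟨zero_le_one, le_rfl, le_rfl, by norm_num⟩)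
  have hAD : 0 ≤ A * D := mul_nonneg hA hD
  have hweighted : ∀ tau s, (tau, s) ∈ Eset → ‖mutld lam0 c1 tau s * H tau s‖ ≤ A * D * s ^ n :=
    fun tau s hts => (norm_mul_le_of_le (hmu tau s hts) (hH tau s hts)).trans_eq (mul_assoc ..).symm
  have hkernel : ∀ z tau s, (tau, s) ∈ Eset ∧
      ((tau - s) / 2, z - (tau + s) / 2) ∈ Icc (0 : ℝ) 1 ×ˢ Icc (0 : ℝ) 1 →
      ‖f ((tau - s) / 2) (z - (tau + s) / 2) * H tau s‖ ≤ A * D * s ^ n := fun z tau s h =>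
    (norm_mul_le_of_le (hf _ _ h.2) (hH tau s h.1)).trans_eq (mul_assoc ..).symm
  set X := A * D * eta ^ (n + 1) / (n + 1)
  have h1 : ‖∫ tau in eta..xi, ∫ s in (0:ℝ)..eta, mutld lam0 c1 tau s * H tau s‖ ≤
      (xi - eta) * X :=
    norm_integral_integral_rectangle_le heta hle fun tau htau s hs =>
      hweighted _ _ (mk_mem_Eset_of_mem_rectangle hp htau hs)
  have h2 : ‖∫ tau in (0:ℝ)..eta, ∫ s in (0:ℝ)..tau, mutld lam0 c1 tau s * H tau s‖ ≤
      eta * X :=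
    norm_integral_integral_triangle_le heta hAD fun tau htau s hs =>
      hweighted _ _ (mk_mem_Eset_of_mem_triangle hp htau hs)
  have h3 : ‖∫ z in eta..xi, ∫ s in (0:ℝ)..eta, ∫ tau in z..(z + eta - s),
      f ((tau - s) / 2) (z - (tau + s) / 2) * H tau s‖ ≤ (xi - eta) * X :=
    norm_integral_integral_rectangle_le heta hle fun z hz s hs =>
      norm_intervalIntegral_le_of_sub_le_one (by linarith [hs.2]) (by linarith [hs.1])
        (mul_nonneg hAD (pow_nonneg hs.1 n))
        fun tau htau => hkernel z tau s (kernel_args_mem_of_mem_rectangle hp hz hs htau)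
  have h4 : ‖∫ z in (0:ℝ)..eta, ∫ s in (0:ℝ)..z, ∫ tau in z..(2 * z - s),
      f ((tau - s) / 2) (z - (tau + s) / 2) * H tau s‖ ≤ eta * X :=
    norm_integral_integral_triangle_le heta hAD fun z hz s hs =>
      norm_intervalIntegral_le_of_sub_le_one (by linarith [hs.2]) (by linarith [hs.1, hz.2])
        (mul_nonneg hAD (pow_nonneg hs.1 n))
        fun tau htau => hkernel z tau s (kernel_args_mem_of_mem_triangle hp hz hs htau)
  have hX : (xi + eta) * X ≤ 2 * X := mul_le_mul_of_nonneg_right (by linarith) (by positivity)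
  simp only [Real.norm_eq_abs, abs_le] at h1 h2 h3 h4 ⊢
  unfold Phi
  constructor <;> linarith [h1.1, h1.2, h2.1, h2.2, h3.1, h3.2, h4.1, h4.2]

theorem exists_bound_mutld_and_kernel (lam0 : ℝ) {c : ℝ → ℝ} {k : ℝ → ℝ → ℝ}
    (hc : Continuous c) (hk : Continuous k.uncurry) :
    ∃ A, (∀ tau s, (tau, s) ∈ Eset → ‖mutld lam0 c tau s‖ ≤ A) ∧
      ∀ x y, (x, y) ∈ Icc (0 : ℝ) 1 ×ˢ Icc (0 : ℝ) 1 → ‖k x y‖ ≤ A := by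
  obtain ⟨A1, hA1⟩ := isCompact_Eset.exists_bound_of_continuousOn
    (continuous_mutld_uncurry lam0 hc).continuousOn
  obtain ⟨A2, hA2⟩ := (isCompact_Icc.prod isCompact_Icc).exists_bound_of_continuousOn
    hk.continuousOn
  exact ⟨max A1 A2, fun _ _ h => (hA1 _ h).trans (le_max_left _ _),
    fun _ _ h => (hA2 _ h).trans (le_max_right _ _)⟩

theorem integral_equation_uniqueness_general (lam0 : ℝ)
    (c1 : ℝ → ℝ) (hc1 : ContinuousOn c1 (Icc 0 1))
    (f : ℝ → ℝ → ℝ)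
    (hf : ContinuousOn (fun p : ℝ × ℝ => f p.1 p.2) (Icc 0 1 ×ˢ Icc 0 1))
    (G1 G2 : ℝ → ℝ → ℝ)
    (hG1cont : ContinuousOn (fun p : ℝ × ℝ => G1 p.1 p.2) Eset)
    (hG2cont : ContinuousOn (fun p : ℝ × ℝ => G2 p.1 p.2) Eset)
    (hG1eq : ∀ xi eta : ℝ, (xi, eta) ∈ Eset →
      G1 xi eta = Gzero lam0 f xi eta + Phi lam0 c1 f G1 xi eta)
    (hG2eq : ∀ xi eta : ℝ, (xi, eta) ∈ Eset →
      G2 xi eta = Gzero lam0 f xi eta + Phi lam0 c1 f G2 xi eta) :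
    ∀ xi eta : ℝ, (xi, eta) ∈ Eset → G1 xi eta = G2 xi eta := by
  obtain ⟨c, hc, hc1c⟩ := hc1.exists_continuous_eqOn isClosed_Icc
  obtain ⟨k, hk, hfk⟩ := hf.exists_continuous_eqOn (isClosed_Icc.prod isClosed_Icc)
  obtain ⟨g1, hg1, hG1g⟩ := hG1cont.exists_continuous_eqOn isClosed_Eset
  obtain ⟨g2, hg2, hG2g⟩ := hG2cont.exists_continuous_eqOn isClosed_Eset
  have hPhi : ∀ {G : ℝ → ℝ → ℝ} {g : ℝ × ℝ → ℝ}, EqOn g (fun p => G p.1 p.2) Eset →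
      ∀ {xi eta}, (xi, eta) ∈ Eset →
        Phi lam0 c1 f G xi eta = Phi lam0 c k.curry g.curry xi eta := fun hg _ _ hp =>
    Phi_congr hc1c.symm (fun _ _ h => (hfk h).symm) (fun _ _ h => (hg h).symm) hp
  set W := g1.curry - g2.curry
  have hW : ∀ xi eta, (xi, eta) ∈ Eset → W xi eta = Phi lam0 c k.curry W xi eta := by
    intro xi eta hp
    rw [Phi_sub hc (by simpa) (by simpa) (by simpa), ← hPhi hG1g hp, ← hPhi hG2g hp,
      show W xi eta = G1 xi eta - G2 xi eta from congrArg₂ (· - ·) (hG1g hp) (hG2g hp),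
      hG1eq xi eta hp, hG2eq xi eta hp]
    ring
  obtain ⟨M, hM⟩ := isCompact_Eset.exists_bound_of_continuousOn
    (f := fun p : ℝ × ℝ => W p.1 p.2) (hg1.sub hg2).continuousOn
  obtain ⟨A, hmu, hkA⟩ := exists_bound_mutld_and_kernel lam0 hc (k := k.curry) (by simpa)
  have hWzero := eq_zero_of_volterra_estimate (C := A) (h := Prod.snd) hM fun n D hD p hp => by
    rw [hW p.1 p.2 hp]
    exact norm_Phi_le hmu hkA (fun _ _ h => hD _ h) hp
  intro xi eta hp
  have h0 : g1 (xi, eta) - g2 (xi, eta) = 0 := hWzero (xi, eta) hp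
  rwa [hG1g hp, hG2g hp, sub_eq_zero] at h0

/-- Uniqueness of continuous solutions of the integral equation `G = G0 + Φ_G` on `E`. -/
theorem integral_equation_uniqueness (lam0 : ℝ) (hlam0 : 0 < lam0)
    (c1 : ℝ → ℝ) (hc1 : ContinuousOn c1 (Icc 0 1))
    (f : ℝ → ℝ → ℝ)
    (hf : ContinuousOn (fun p : ℝ × ℝ => f p.1 p.2) (Icc 0 1 ×ˢ Icc 0 1))
    (G1 G2 : ℝ → ℝ → ℝ)
    (hG1cont : ContinuousOn (fun p : ℝ × ℝ => G1 p.1 p.2) Eset)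
    (hG2cont : ContinuousOn (fun p : ℝ × ℝ => G2 p.1 p.2) Eset)
    (hG1eq : ∀ xi eta : ℝ, (xi, eta) ∈ Eset →
      G1 xi eta = Gzero lam0 f xi eta + Phi lam0 c1 f G1 xi eta)
    (hG2eq : ∀ xi eta : ℝ, (xi, eta) ∈ Eset →
      G2 xi eta = Gzero lam0 f xi eta + Phi lam0 c1 f G2 xi eta) :
    ∀ xi eta : ℝ, (xi, eta) ∈ Eset → G1 xi eta = G2 xi eta :=
  integral_equation_uniqueness_general lam0 c1 hc1 f hf G1 G2 hG1cont hG2cont hG1eq hG2eq
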